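/- If every component of a rank-n tensor T̄ relative to some null frame has strictly negative boost weight, then every scalar formed by a full contraction of a tensor product of copies of T̄ (using the metric to raise indices) vanishes. In particular such tensors have all vanishing scalar polynomial invariants. -/
import Mathlib


open Finset

noncomputable section

/-- The inverse null-frame metric for the frame {n, ℓ, m, m̄} (indexed 0,1,2,3):
g^{01} = g^{10} = -1, g^{23} = g^{32} = 1, all other entries zero. -/
def ginv (i j : Fin 4) : ℂ :=
  if (i = 0 ∧ j = 1) ∨ (i = 1 ∧ j = 0) then -1
  else if (i = 2 ∧ j = 3) ∨ (i = 3 ∧ j = 2) then 1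
  else 0

/-- Boost weight of an index tuple: +1 for each index 0 (the n-direction),
-1 for each index 1 (the ℓ-direction). -/
def bw {N : ℕ} (a : Fin N → Fin 4) : ℤ :=
  ∑ i : Fin N, ((if a i = 0 then (1 : ℤ) else 0) - (if a i = 1 then 1 else 0))

/-- Weight of a single index: +1 for 0, -1 for 1, 0 otherwise. -/
def w (x : Fin 4) : ℤ := (if x = 0 then (1 : ℤ) else 0) - (if x = 1 then 1 else 0)

lemma ginv_ne_zero_w {a b : Fin 4} (h : ginv a b ≠ 0) : w a + w b = 0 := by
  unfold ginv at h
  split_ifs at h with h1 h2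
  · rcases h1 with ⟨ha, hb⟩ | ⟨ha, hb⟩ <;> subst ha <;> subst hb <;> decide
  · rcases h2 with ⟨ha, hb⟩ | ⟨ha, hb⟩ <;> subst ha <;> subst hb <;> decide
  · exact absurd rfl h

/-- If every (nonzero) component of a rank-N tensor T̄ relative to a null frame
has strictly negative boost weight, then every full contraction of a tensor
product of k ≥ 1 copies of T̄ with the inverse metric vanishes: all its scalar
polynomial invariants are zero (the VSI property). -/
theorem vsi_of_negative_boost_weight (N k M : ℕ) (hk : 1 ≤ k)
    (T : (Fin N → Fin 4) → ℂ)
    (hT : ∀ a : Fin N → Fin 4, T a ≠ 0 → bw a < 0)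
    (em : Fin k × Fin N ≃ Fin (k * N))
    (pe : (Fin M) ⊕ (Fin M) ≃ Fin (k * N)) :
    ∑ f : (Fin (k * N) → Fin 4),
      (∏ p : Fin M, ginv (f (pe (Sum.inl p))) (f (pe (Sum.inr p)))) *
        ∏ j : Fin k, T (fun i => f (em (j, i))) = 0 := by
  apply Finset.sum_eq_zero
  intro f _
  by_contra h
  have hg : (∏ p : Fin M, ginv (f (pe (Sum.inl p))) (f (pe (Sum.inr p)))) ≠ 0 :=
    fun h0 => h (by rw [h0, zero_mul])
  have hTp : (∏ j : Fin k, T (fun i => f (em (j, i)))) ≠ 0 :=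
    fun h0 => h (by rw [h0, mul_zero])
  -- total weight sum
  set S : ℤ := ∑ x : Fin (k * N), w (f x) with hS
  -- via pe: S = 0
  have hS0 : S = 0 := by
    have := Fintype.sum_equiv pe (fun y => w (f (pe y))) (fun x => w (f x)) (fun y => rfl)
    rw [hS, ← this, Fintype.sum_sum_type]
    rw [← Finset.sum_add_distrib]
    apply Finset.sum_eq_zero
    intro p _
    apply ginv_ne_zero_w
    exact Finset.prod_ne_zero_iff.mp hg p (Finset.mem_univ p)
  -- via em: S < 0
  have hSneg : S < 0 := by
    have := Fintype.sum_equiv em (fun y => w (f (em y))) (fun x => w (f x)) (fun y => rfl)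
    rw [hS, ← this, Fintype.sum_prod_type]
    have hterm : ∀ j : Fin k, (∑ i : Fin N, w (f (em (j, i)))) < 0 := by
      intro j
      have := hT _ (Finset.prod_ne_zero_iff.mp hTp j (Finset.mem_univ j))
      simpa [bw, w] using this
    calc (∑ j : Fin k, ∑ i : Fin N, w (f (em (j, i))))
        < ∑ _j : Fin k, (0 : ℤ) := by
          apply Finset.sum_lt_sum_of_nonempty
          · exact Finset.univ_nonempty_iff.mpr (Fin.pos_iff_nonempty.mp hk)
          · intro j _; exact hterm j
      _ = 0 := by simp
  omega
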